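/- The class of languages recognized by one-state Turing machines does not contain all regular languages: the regular language {1} is not recognized by any one-state Turing machine. -/

import Mathlib

/-!
A blank halting symbol would accept the empty word, a halting `1` the word `11`; so neither halts,
and the runs on `1` and `11` begin by writing the same symbol on cell 0 and moving the same way.
If blanks push the head in that same direction, the run on `1` drives into blank tape forever.
Otherwise the runs on `1` and `11` soon reach configurations (after two steps each, resp. after two
and three steps and a translation by one cell) that agree on the half-tape behind the first
all-blank half-line of the `1`-configuration. A halting run can never enter such a half-line, as
blanks only push the head further in, so the run on `11` halts too.
-/

inductive Dir : Type
  | L | R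
deriving DecidableEq

def Dir.move : Dir → ℤ
  | .L => -1
  | .R => 1

/-- A one-state Turing machine: a blank symbol, a set of halting symbols
(as a Boolean predicate) and a transition function on the tape alphabet. -/
structure OneStateTM (Γ : Type) where
  blank : Γ
  halt : Γ → Bool
  δ : Γ → Γ × Dir

/-- A configuration: a bi-infinite tape and a head position. -/
structure Cfg (Γ : Type) where
  tape : ℤ → Γ
  pos : ℤ

/-- One step of the machine; `none` means the machine has halted
(the head reads a halting symbol). -/
def OneStateTM.step {Γ : Type} (M : OneStateTM Γ) (c : Cfg Γ) : Option (Cfg Γ) :=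
  if M.halt (c.tape c.pos) then none
  else some ⟨Function.update c.tape c.pos (M.δ (c.tape c.pos)).1,
             c.pos + (M.δ (c.tape c.pos)).2.move⟩

/-- Initial tape: the input written in cells 0,…,len−1, blanks elsewhere. -/
def OneStateTM.initTape {Γ : Type} (M : OneStateTM Γ) (l : List Γ) : ℤ → Γ :=
  fun i => if i < 0 then M.blank else l.getD i.toNat M.blank

/-- The machine halts starting from configuration `c`. -/
def OneStateTM.HaltsFrom {Γ : Type} (M : OneStateTM Γ) (c : Cfg Γ) : Prop :=
  ∃ n : ℕ, (fun o => Option.bind o M.step)^[n] (some c) = none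

/-- The machine halts on input `l` (head initially on the leftmost input symbol). -/
def OneStateTM.HaltsOn {Γ : Type} (M : OneStateTM Γ) (l : List Γ) : Prop :=
  M.HaltsFrom ⟨M.initTape l, 0⟩

open Function

namespace OneStateTM

variable {Γ : Type} (M : OneStateTM Γ)

theorem haltsFrom_of_halt {c : Cfg Γ} (h : M.halt (c.tape c.pos) = true) : M.HaltsFrom c :=
  ⟨1, by simp [step, h]⟩

theorem step_of_read {c : Cfg Γ} {y a : Γ} {d : Dir} (hr : c.tape c.pos = y)
    (hy : M.halt y = false) (hδ : M.δ y = (a, d)) :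
    M.step c = some ⟨update c.tape c.pos a, c.pos + d.move⟩ := by
  simp [step, hr, hy, hδ]

theorem haltsFrom_iff_of_step_eq_some {c c' : Cfg Γ} (h : M.step c = some c') :
    M.HaltsFrom c ↔ M.HaltsFrom c' := by
  constructor
  · rintro ⟨_ | n, hn⟩
    · simp at hn
    · exact ⟨n, by rwa [iterate_succ_apply, Option.bind_some, h] at hn⟩
  · rintro ⟨n, hn⟩
    exact ⟨n + 1, by rwa [iterate_succ_apply, Option.bind_some, h]⟩

theorem haltsFrom_iff_of_read {c : Cfg Γ} {y a : Γ} {d : Dir} (hr : c.tape c.pos = y)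
    (hy : M.halt y = false) (hδ : M.δ y = (a, d)) :
    M.HaltsFrom c ↔ M.HaltsFrom ⟨update c.tape c.pos a, c.pos + d.move⟩ :=
  M.haltsFrom_iff_of_step_eq_some (M.step_of_read hr hy hδ)

/- `0 ≤ (i - q) * d.move` says that cell `i` lies at or beyond `q` in direction `d`. -/
theorem not_haltsFrom_of_blank_ahead {b : Γ} {d : Dir} (hb : M.halt M.blank = false)
    (hδb : M.δ M.blank = (b, d)) {c : Cfg Γ}
    (hc : ∀ i, 0 ≤ (i - c.pos) * d.move → c.tape i = M.blank) : ¬ M.HaltsFrom c := by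
  rintro ⟨n, hn⟩
  induction n generalizing c with
  | zero => simp at hn
  | succ n ih =>
    rw [iterate_succ_apply, Option.bind_some, M.step_of_read (hc _ (by simp)) hb hδb] at hn
    refine ih (fun i hi => ?_) hn
    dsimp only at hi ⊢
    have hne : i ≠ c.pos := by rintro rfl; cases d <;> simp [Dir.move] at hi
    rw [update_of_ne hne]
    exact hc i (by cases d <;> simp [Dir.move] at hi ⊢ <;> omega)

/- The halting run from `c` never reaches `q`, since from there on it would read only blanks;
so `c'` replays it cell for cell, translated by `s`. -/
theorem haltsFrom_of_agree_behind {b : Γ} {d : Dir} (hb : M.halt M.blank = false)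
    (hδb : M.δ M.blank = (b, d)) (q s : ℤ) {c c' : Cfg Γ} (h : M.HaltsFrom c)
    (hpos : (c.pos - q) * d.move < 0)
    (hblank : ∀ i, 0 ≤ (i - q) * d.move → c.tape i = M.blank)
    (hagree : ∀ i, (i - q) * d.move < 0 → c'.tape (i + s) = c.tape i)
    (hpos' : c'.pos = c.pos + s) : M.HaltsFrom c' := by
  obtain ⟨n, hn⟩ := h
  induction n generalizing c c' with
  | zero => simp at hn
  | succ n ih =>
    have hread : c'.tape c'.pos = c.tape c.pos := hpos' ▸ hagree _ hpos
    cases hh : M.halt (c.tape c.pos)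
    case true => exact M.haltsFrom_of_halt (hread ▸ hh)
    case false =>
    rcases hδ : M.δ (c.tape c.pos) with ⟨v, e⟩
    rw [M.haltsFrom_iff_of_read hread hh hδ, hpos']
    rw [iterate_succ_apply, Option.bind_some, M.step_of_read rfl hh hδ] at hn
    have hblank' : ∀ i, 0 ≤ (i - q) * d.move → update c.tape c.pos v i = M.blank := by
      intro i hi
      rw [update_of_ne (by rintro rfl; linarith)]
      exact hblank i hi
    by_cases hq : (c.pos + e.move - q) * d.move < 0
    · refine ih hq hblank' (fun i hi => ?_) (add_right_comm ..) hn
      by_cases hi' : i = c.pos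
      · simp [hi']
      · dsimp only
        rw [update_of_ne (by omega), update_of_ne hi', hagree i hi]
    · have hq' : c.pos + e.move = q := by
        cases d <;> cases e <;> simp only [Dir.move] at hpos hq ⊢ <;> omega
      refine absurd ⟨n, hn⟩ (M.not_haltsFrom_of_blank_ahead hb hδb fun i hi => hblank' i ?_)
      rwa [← hq']

theorem initTape_singleton (x : Γ) : M.initTape [x] = update (fun _ => M.blank) 0 x := by
  funext i
  simp only [initTape, update_apply]
  grind

theorem initTape_pair (x : Γ) :
    M.initTape [x, x] = update (update (fun _ => M.blank) 0 x) 1 x := by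
  funext i
  simp only [initTape, update_apply]
  grind

theorem haltsOn_nil_of_halt_blank (h : M.halt M.blank = true) : M.HaltsOn [] :=
  M.haltsFrom_of_halt (by simpa [initTape] using h)

theorem haltsOn_cons_of_halt {x : Γ} (l : List Γ) (h : M.halt x = true) : M.HaltsOn (x :: l) :=
  M.haltsFrom_of_halt (by simpa [initTape] using h)

variable {x a b : Γ}

theorem not_haltsOn_singleton_of_same_dir {d : Dir} (hb : M.halt M.blank = false)
    (hx : M.halt x = false) (hδx : M.δ x = (a, d))
    (hδb : M.δ M.blank = (b, d)) : ¬ M.HaltsOn [x] := by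
  rw [HaltsOn, initTape_singleton, M.haltsFrom_iff_of_read (by simp) hx hδx]
  refine M.not_haltsFrom_of_blank_ahead hb hδb fun i hi => ?_
  cases d <;> simp [Dir.move, update_apply] at hi ⊢ <;> grind

/- After two steps both runs are back at cell 0 and differ only at cell 1, blank for `[x]`. -/
theorem haltsOn_pair_of_left_right (hb : M.halt M.blank = false)
    (hx : M.halt x = false) (hδx : M.δ x = (a, .L)) (hδb : M.δ M.blank = (b, .R))
    (h : M.HaltsOn [x]) : M.HaltsOn [x, x] := by
  rw [HaltsOn, initTape_singleton] at h
  rw [HaltsOn, initTape_pair]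
  have h₂ := (M.haltsFrom_iff_of_read (by simp [Dir.move]) hb hδb).1
    ((M.haltsFrom_iff_of_read (by simp) hx hδx).1 h)
  refine (M.haltsFrom_iff_of_read (by simp) hx hδx).2 <|
    (M.haltsFrom_iff_of_read (by simp [Dir.move]) hb hδb).2 ?_
  refine M.haltsFrom_of_agree_behind hb hδb 1 0 h₂ ?_ ?_ ?_ ?_
  all_goals simp [Dir.move, update_apply] <;> grind

/- After two steps on `[x]` (head at 0) and three on `[x, x]` (head at 1), the tapes agree
to the right of cell -1 up to a shift by one cell. -/
theorem haltsOn_pair_of_right_left (hb : M.halt M.blank = false)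
    (hx : M.halt x = false) (hδx : M.δ x = (a, .R)) (hδb : M.δ M.blank = (b, .L))
    (h : M.HaltsOn [x]) : M.HaltsOn [x, x] := by
  rw [HaltsOn, initTape_singleton] at h
  rw [HaltsOn, initTape_pair]
  have h₂ := (M.haltsFrom_iff_of_read (by simp [Dir.move]) hb hδb).1
    ((M.haltsFrom_iff_of_read (by simp) hx hδx).1 h)
  refine (M.haltsFrom_iff_of_read (by simp) hx hδx).2 <|
    (M.haltsFrom_iff_of_read (by simp [Dir.move]) hx hδx).2 <|
    (M.haltsFrom_iff_of_read (by simp [Dir.move]) hb hδb).2 ?_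
  refine M.haltsFrom_of_agree_behind hb hδb (-1) 1 h₂ ?_ ?_ ?_ ?_
  all_goals simp [Dir.move, update_apply] <;> grind

theorem haltsOn_pair_of_haltsOn_singleton (hb : M.halt M.blank = false)
    (hx : M.halt x = false) (h : M.HaltsOn [x]) : M.HaltsOn [x, x] := by
  rcases hδx : M.δ x with ⟨a, _ | _⟩ <;> rcases hδb : M.δ M.blank with ⟨b, _ | _⟩
  · exact absurd h (M.not_haltsOn_singleton_of_same_dir hb hx hδx hδb)
  · exact M.haltsOn_pair_of_left_right hb hx hδx hδb h
  · exact M.haltsOn_pair_of_right_left hb hx hδx hδb h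
  · exact absurd h (M.not_haltsOn_singleton_of_same_dir hb hx hδx hδb)

end OneStateTM

/-- the regular language {1} is not recognized (by halting) by any
one-state Turing machine. -/
theorem no_oneState_recognizes_singleton_one :
    ¬ ∃ (Γ : Type) (M : OneStateTM Γ) (one : Γ), one ≠ M.blank ∧
        ∀ k : ℕ, (M.HaltsOn (List.replicate k one) ↔ k = 1) := by
  rintro ⟨Γ, M, one, -, h⟩
  have hb : M.halt M.blank = false := by
    by_contra hb
    exact absurd ((h 0).1 (M.haltsOn_nil_of_halt_blank (by simpa using hb))) (by decide)
  have hone : M.halt one = false := by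
    by_contra hone
    exact absurd ((h 2).1 (M.haltsOn_cons_of_halt [one] (by simpa using hone))) (by decide)
  exact absurd ((h 2).1 (M.haltsOn_pair_of_haltsOn_singleton hb hone ((h 1).2 rfl))) (by decide)
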